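/- The quasi-Cauchy density satisfies the tail-regularity condition with exponent κ = 2: the ratio (∫_y^∞ γ(u) du) / (y γ(y)) tends to 1 as y → ∞; in particular, y^{-1} γ(y)^{-1} ∫_y^∞ γ(u) du is bounded above and below away from zero for all sufficiently large y. -/

import Mathlib

open MeasureTheory Real Filter

/-- The standard normal density. -/
noncomputable def phi (x : ℝ) : ℝ := (Real.sqrt (2 * Real.pi))⁻¹ * Real.exp (-x ^ 2 / 2)

/-- The standard normal cumulative distribution function. -/
noncomputable def Phi (x : ℝ) : ℝ := ∫ t in Set.Iic x, phi t

/-- The upper tail of the standard normal distribution. -/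
noncomputable def PhiBar (x : ℝ) : ℝ := 1 - Phi x

open Set

lemma sqrt2pi_pos : 0 < Real.sqrt (2 * Real.pi) := Real.sqrt_pos.2 (by positivity)

lemma phi_pos (x : ℝ) : 0 < phi x := by
  unfold phi; positivity

lemma phi_cont : Continuous phi := by
  unfold phi; continuity

lemma phi_integrable : Integrable phi := by
  have h : Integrable (fun x : ℝ => Real.exp (-(1/2 : ℝ) * x ^ 2)) :=
    integrable_exp_neg_mul_sq (by norm_num)
  have := h.const_mul (Real.sqrt (2 * Real.pi))⁻¹
  refine this.congr (Eventually.of_forall fun x => ?_)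
  unfold phi; ring_nf

lemma integral_phi : ∫ x, phi x = 1 := by
  have h : ∫ x : ℝ, Real.exp (-(1/2 : ℝ) * x ^ 2) = Real.sqrt (π / (1/2)) :=
    integral_gaussian (1/2)
  have e : ∀ x : ℝ, phi x = (Real.sqrt (2 * Real.pi))⁻¹ * Real.exp (-(1/2:ℝ) * x ^ 2) := by
    intro x; unfold phi; ring_nf
  calc ∫ x, phi x = ∫ x, (Real.sqrt (2 * Real.pi))⁻¹ * Real.exp (-(1/2:ℝ) * x ^ 2) := by
        simp_rw [e]
    _ = (Real.sqrt (2 * Real.pi))⁻¹ * ∫ x, Real.exp (-(1/2:ℝ) * x ^ 2) := MeasureTheory.integral_const_mul _ _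
    _ = 1 := by
        rw [h]; rw [show π / (1/2 : ℝ) = 2 * π by ring]
        exact inv_mul_cancel₀ (ne_of_gt sqrt2pi_pos)

lemma hasDerivAt_phi (x : ℝ) : HasDerivAt phi (-x * phi x) x := by
  have h1 : HasDerivAt (fun x : ℝ => -x ^ 2 / 2) (-x) x := by
    have := ((hasDerivAt_pow 2 x).neg.div_const 2)
    refine this.congr_deriv ?_; ring
  have h2 := (h1.exp).const_mul (Real.sqrt (2 * Real.pi))⁻¹
  refine h2.congr_deriv ?_
  unfold phi; ring

lemma phi_tendsto : Tendsto phi atTop (nhds 0) := by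
  have h1 : Tendsto (fun x : ℝ => -x ^ 2 / 2) atTop atBot := by
    apply Tendsto.atBot_div_const (by norm_num)
    exact tendsto_neg_atBot_iff.2 (tendsto_pow_atTop two_ne_zero)
  have := (Real.tendsto_exp_atBot.comp h1).const_mul (Real.sqrt (2 * Real.pi))⁻¹
  rw [mul_zero] at this
  refine this.congr fun x => ?_
  simp [phi, Function.comp]

lemma hasDerivAt_Phi (x : ℝ) : HasDerivAt Phi (phi x) x := by
  have key : Phi = fun x => Phi 0 + ∫ t in (0:ℝ)..x, phi t := by
    funext y
    rw [← intervalIntegral.integral_Iic_sub_Iic (phi_integrable.integrableOn)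
      (phi_integrable.integrableOn)]
    unfold Phi; ring
  rw [key]
  exact (intervalIntegral.integral_hasDerivAt_right
    (phi_integrable.intervalIntegrable)
    (phi_cont.stronglyMeasurable.stronglyMeasurableAtFilter)
    phi_cont.continuousAt).const_add _

lemma PhiBar_eq (y : ℝ) : PhiBar y = ∫ x in Set.Ioi y, phi x := by
  have := intervalIntegral.integral_Iic_add_Ioi (b := y)
    (phi_integrable.integrableOn) (phi_integrable.integrableOn) (μ := volume)
  rw [integral_phi] at this
  unfold PhiBar Phi
  linarith

lemma hasDerivAt_PhiBar (x : ℝ) : HasDerivAt PhiBar (-phi x) x := by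
  exact ((hasDerivAt_Phi x).const_sub 1)

lemma PhiBar_nonneg (y : ℝ) : 0 ≤ PhiBar y := by
  rw [PhiBar_eq]
  exact setIntegral_nonneg measurableSet_Ioi fun x _ => (phi_pos x).le

-- moment identity: ∫_{Ioi y} u φ(u) du = φ(y), for y ≥ 0
lemma moment_eq {y : ℝ} (hy : 0 ≤ y) : ∫ u in Set.Ioi y, u * phi u = phi y := by
  have h := integral_Ioi_of_hasDerivAt_of_nonneg' (g := fun u => -phi u)
    (g' := fun u => u * phi u) (a := y) (l := 0)
    (fun x _ => by simpa using (hasDerivAt_phi x).fun_neg)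
    (fun x hx => mul_nonneg (le_trans hy (le_of_lt hx)) (phi_pos x).le)
    (phi_tendsto.neg.mono_right (by rw [neg_zero]))
  simpa using h

lemma moment_integrable {y : ℝ} (hy : 0 ≤ y) :
    IntegrableOn (fun u => u * phi u) (Set.Ioi y) := by
  exact integrableOn_Ioi_deriv_of_nonneg' (g := fun u => -phi u)
    (fun x _ => by simpa using (hasDerivAt_phi x).fun_neg)
    (fun x hx => mul_nonneg (le_trans hy (le_of_lt hx)) (phi_pos x).le)
    (phi_tendsto.neg.mono_right (by rw [neg_zero]))

lemma aux2_deriv {x : ℝ} (hx : 0 < x) :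
    HasDerivAt (fun u => -(phi u / u)) (phi x + phi x / x ^ 2) x := by
  have h := ((hasDerivAt_phi x).div (hasDerivAt_id x) (ne_of_gt hx)).neg
  refine h.congr_deriv ?_
  simp only [id]
  field_simp
  ring

lemma aux2_tendsto : Tendsto (fun u => -(phi u / u)) atTop (nhds 0) := by
  have : Tendsto (fun u => phi u / u) atTop (nhds 0) := by
    have := phi_tendsto.mul tendsto_inv_atTop_zero
    rw [mul_zero] at this
    exact this.congr fun x => (div_eq_mul_inv _ _).symm
  simpa using this.neg

lemma aux2_eq {y : ℝ} (hy : 0 < y) :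
    ∫ u in Set.Ioi y, (phi u + phi u / u ^ 2) = phi y / y := by
  have h := integral_Ioi_of_hasDerivAt_of_nonneg' (g := fun u => -(phi u / u))
    (g' := fun u => phi u + phi u / u ^ 2) (a := y) (l := 0)
    (fun x hx => aux2_deriv (lt_of_lt_of_le hy hx))
    (fun x hx => by have := phi_pos x; have hx' : (0:ℝ) < x := hy.trans hx.out; positivity)
    aux2_tendsto
  simpa using h

lemma aux2_integrable {y : ℝ} (hy : 0 < y) :
    IntegrableOn (fun u => phi u + phi u / u ^ 2) (Set.Ioi y) :=
  integrableOn_Ioi_deriv_of_nonneg' (fun x hx => aux2_deriv (lt_of_lt_of_le hy hx))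
    (fun x hx => by have := phi_pos x; have hx' : (0:ℝ) < x := hy.trans hx.out; positivity) aux2_tendsto

lemma I2_integrable {y : ℝ} (hy : 0 < y) :
    IntegrableOn (fun u => phi u / u ^ 2) (Set.Ioi y) := by
  have := (aux2_integrable hy).sub (phi_integrable.integrableOn (s := Set.Ioi y))
  exact IntegrableOn.congr_fun this (fun x _ => by simp) measurableSet_Ioi

lemma PhiBar_identity {y : ℝ} (hy : 0 < y) :
    PhiBar y = phi y / y - ∫ u in Set.Ioi y, phi u / u ^ 2 := by
  have h := aux2_eq hy
  rw [MeasureTheory.integral_add (phi_integrable.integrableOn) (I2_integrable hy)] at h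
  rw [PhiBar_eq]
  linarith

lemma aux4_deriv {x : ℝ} (hx : 0 < x) :
    HasDerivAt (fun u => -(phi u / u ^ 3)) (phi x / x ^ 2 + 3 * (phi x / x ^ 4)) x := by
  have hx3 : x ^ 3 ≠ 0 := by positivity
  have h := ((hasDerivAt_phi x).div (hasDerivAt_pow 3 x) hx3).neg
  refine h.congr_deriv ?_
  have hx0 : x ≠ 0 := ne_of_gt hx
  field_simp
  ring

lemma aux4_tendsto : Tendsto (fun u => -(phi u / u ^ 3)) atTop (nhds 0) := by
  have : Tendsto (fun u : ℝ => phi u / u ^ 3) atTop (nhds 0) := by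
    have h3 : Tendsto (fun u : ℝ => (u ^ 3)⁻¹) atTop (nhds 0) :=
      tendsto_inv_atTop_zero.comp (tendsto_pow_atTop three_ne_zero)
    have := phi_tendsto.mul h3
    rw [mul_zero] at this
    exact this.congr fun x => (div_eq_mul_inv _ _).symm
  simpa using this.neg

lemma aux4_eq {y : ℝ} (hy : 0 < y) :
    ∫ u in Set.Ioi y, (phi u / u ^ 2 + 3 * (phi u / u ^ 4)) = phi y / y ^ 3 := by
  have h := integral_Ioi_of_hasDerivAt_of_nonneg' (g := fun u => -(phi u / u ^ 3))
    (g' := fun u => phi u / u ^ 2 + 3 * (phi u / u ^ 4)) (a := y) (l := 0)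
    (fun x hx => aux4_deriv (lt_of_lt_of_le hy hx))
    (fun x hx => by have := phi_pos x; have hx' : (0:ℝ) < x := hy.trans hx.out; positivity)
    aux4_tendsto
  simpa using h

lemma aux4_integrable {y : ℝ} (hy : 0 < y) :
    IntegrableOn (fun u => phi u / u ^ 2 + 3 * (phi u / u ^ 4)) (Set.Ioi y) :=
  integrableOn_Ioi_deriv_of_nonneg' (fun x hx => aux4_deriv (lt_of_lt_of_le hy hx))
    (fun x hx => by have := phi_pos x; have hx' : (0:ℝ) < x := hy.trans hx.out; positivity) aux4_tendsto

lemma I4_integrable {y : ℝ} (hy : 0 < y) :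
    IntegrableOn (fun u => phi u / u ^ 4) (Set.Ioi y) := by
  have := ((aux4_integrable hy).sub (I2_integrable hy)).const_mul (3 : ℝ)⁻¹
  exact IntegrableOn.congr_fun this (fun x _ => by simp) measurableSet_Ioi

lemma I2_identity {y : ℝ} (hy : 0 < y) :
    ∫ u in Set.Ioi y, phi u / u ^ 2
      = phi y / y ^ 3 - 3 * ∫ u in Set.Ioi y, phi u / u ^ 4 := by
  have h := aux4_eq hy
  rw [MeasureTheory.integral_add (I2_integrable hy) ((I4_integrable hy).const_mul 3),
    MeasureTheory.integral_const_mul] at h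
  linarith

lemma I2_nonneg (y : ℝ) : 0 ≤ ∫ u in Set.Ioi y, phi u / u ^ 2 :=
  setIntegral_nonneg measurableSet_Ioi fun x _ => by have := (phi_pos x).le; positivity

lemma I4_nonneg (y : ℝ) : 0 ≤ ∫ u in Set.Ioi y, phi u / u ^ 4 :=
  setIntegral_nonneg measurableSet_Ioi fun x _ => by have := (phi_pos x).le; positivity

lemma I4_le {y : ℝ} (hy : 0 < y) :
    ∫ u in Set.Ioi y, phi u / u ^ 4 ≤ phi y / y ^ 5 := by
  have hmono : ∫ u in Set.Ioi y, phi u / u ^ 4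
      ≤ ∫ u in Set.Ioi y, u * phi u / y ^ 5 := by
    refine setIntegral_mono_on (I4_integrable hy)
      (((moment_integrable hy.le).div_const _)) measurableSet_Ioi ?_
    intro x hx
    have hx' : y < x := hx
    have h0 : 0 < x := hy.trans hx'
    rw [div_le_div_iff₀ (by positivity) (by positivity)]
    have hp := phi_pos x
    nlinarith [pow_le_pow_left₀ hy.le (le_of_lt hx') 5, phi_pos x]
  have : ∫ u in Set.Ioi y, u * phi u / y ^ 5 = phi y / y ^ 5 := by
    rw [MeasureTheory.integral_div, moment_eq hy.le]
  linarith

/-- The quasi-Cauchy density. -/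
noncomputable def quasiCauchy (u : ℝ) : ℝ :=
  (Real.sqrt (2 * Real.pi))⁻¹ * (1 - |u| * PhiBar |u| / phi u)

lemma PhiBar_le {y : ℝ} (hy : 0 < y) : PhiBar y ≤ phi y / y := by
  have := PhiBar_identity hy
  have h2 := I2_nonneg y
  linarith

lemma PhiBar_ge {y : ℝ} (hy : 0 < y) : phi y / y - phi y / y ^ 3 ≤ PhiBar y := by
  have := PhiBar_identity hy
  have h2 : ∫ u in Set.Ioi y, phi u / u ^ 2 ≤ phi y / y ^ 3 := by
    have := I2_identity hy
    have := I4_nonneg y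
    linarith
  linarith

lemma I2_ge {y : ℝ} (hy : 0 < y) :
    phi y / y ^ 3 - 3 * (phi y / y ^ 5) ≤ ∫ u in Set.Ioi y, phi u / u ^ 2 := by
  have h1 := I2_identity hy
  have h2 := I4_le hy
  linarith

lemma I2_le' {y : ℝ} (hy : 0 < y) :
    ∫ u in Set.Ioi y, phi u / u ^ 2 ≤ phi y / y ^ 3 := by
  have := I2_identity hy
  have := I4_nonneg y
  linarith

lemma quasiCauchy_eq {y : ℝ} (hy : 0 ≤ y) :
    quasiCauchy y = (Real.sqrt (2 * Real.pi))⁻¹ * (1 - y * PhiBar y / phi y) := by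
  unfold quasiCauchy
  rw [abs_of_nonneg hy]

lemma quasiCauchy_eq' {y : ℝ} (hy : 0 < y) :
    quasiCauchy y = (Real.sqrt (2 * Real.pi))⁻¹ *
      (y * (∫ u in Set.Ioi y, phi u / u ^ 2) / phi y) := by
  rw [quasiCauchy_eq hy.le, PhiBar_identity hy]
  have hp := (phi_pos y).ne'
  have hy0 := hy.ne'
  field_simp
  ring

lemma quasiCauchy_nonneg {y : ℝ} (hy : 0 < y) : 0 ≤ quasiCauchy y := by
  rw [quasiCauchy_eq' hy]
  have h1 := I2_nonneg y
  have h2 := (phi_pos y).le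
  have h3 := sqrt2pi_pos.le
  have h4 : 0 ≤ y * (∫ u in Set.Ioi y, phi u / u ^ 2) / phi y :=
    div_nonneg (mul_nonneg hy.le h1) h2
  exact mul_nonneg (inv_nonneg.2 h3) h4

lemma ratio_tendsto : Tendsto (fun u : ℝ => PhiBar u / phi u) atTop (nhds 0) := by
  apply tendsto_of_tendsto_of_tendsto_of_le_of_le' tendsto_const_nhds
    (tendsto_inv_atTop_zero)
  · filter_upwards [eventually_gt_atTop (0:ℝ)] with u hu
    exact div_nonneg (PhiBar_nonneg u) (phi_pos u).le
  · filter_upwards [eventually_gt_atTop (0:ℝ)] with u hu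
    rw [div_le_iff₀ (phi_pos u)]
    have h := PhiBar_le hu
    rw [div_eq_mul_inv, mul_comm] at h
    exact h

lemma hasDerivAt_main {x : ℝ} (hx : 0 < x) :
    HasDerivAt (fun u => -((Real.sqrt (2 * Real.pi))⁻¹ * (PhiBar u / phi u)))
      (quasiCauchy x) x := by
  have h : HasDerivAt (fun u => PhiBar u / phi u)
      ((-phi x * phi x - PhiBar x * (-x * phi x)) / (phi x) ^ 2) x :=
    (hasDerivAt_PhiBar x).div (hasDerivAt_phi x) (phi_pos x).ne'
  have h2 := (h.const_mul (Real.sqrt (2 * Real.pi))⁻¹).neg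
  refine h2.congr_deriv ?_
  rw [quasiCauchy_eq hx.le]
  have hp := (phi_pos x).ne'
  field_simp
  ring

lemma main_integral {y : ℝ} (hy : 0 < y) :
    ∫ u in Set.Ici y, quasiCauchy u
      = (Real.sqrt (2 * Real.pi))⁻¹ * (PhiBar y / phi y) := by
  rw [MeasureTheory.integral_Ici_eq_integral_Ioi]
  have h := integral_Ioi_of_hasDerivAt_of_nonneg'
    (g := fun u => -((Real.sqrt (2 * Real.pi))⁻¹ * (PhiBar u / phi u)))
    (g' := quasiCauchy) (a := y) (l := 0)
    (fun x hx => hasDerivAt_main (hy.trans_le hx))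
    (fun x hx => quasiCauchy_nonneg (hy.trans hx.out))
    (by simpa using (ratio_tendsto.const_mul (Real.sqrt (2 * Real.pi))⁻¹).neg)
  rw [h]; ring

lemma I2_pos {y : ℝ} (hy : 2 ≤ y) : 0 < ∫ u in Set.Ioi y, phi u / u ^ 2 := by
  have hy0 : (0:ℝ) < y := by linarith
  have h := I2_ge hy0
  have hB := phi_pos y
  have h5 : (0:ℝ) < y ^ 5 := by positivity
  have h3 : (0:ℝ) < y ^ 3 := by positivity
  have key : 0 < phi y / y ^ 3 - 3 * (phi y / y ^ 5) := by
    have : phi y / y ^ 3 - 3 * (phi y / y ^ 5) = phi y * (y ^ 2 - 3) / y ^ 5 := by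
      field_simp
    rw [this]
    have h23 : (0:ℝ) < y ^ 2 - 3 := by nlinarith
    positivity
  linarith

lemma ratio_eq {y : ℝ} (hy : 2 ≤ y) :
    (∫ u in Set.Ici y, quasiCauchy u) / (y * quasiCauchy y)
      = PhiBar y / (y ^ 2 * ∫ u in Set.Ioi y, phi u / u ^ 2) := by
  have hy0 : (0:ℝ) < y := by linarith
  rw [main_integral hy0, quasiCauchy_eq' hy0]
  have hc : Real.sqrt (2 * Real.pi) ≠ 0 := sqrt2pi_pos.ne'
  have hB : phi y ≠ 0 := (phi_pos y).ne'
  have hs : (∫ u in Set.Ioi y, phi u / u ^ 2) ≠ 0 := (I2_pos hy).ne'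
  have hyne : y ≠ 0 := hy0.ne'
  field_simp

set_option maxHeartbeats 1000000 in
lemma ratio_bounds {y : ℝ} (hy : 2 ≤ y) :
    1 - 1 / y ^ 2 ≤ (∫ u in Set.Ici y, quasiCauchy u) / (y * quasiCauchy y) ∧
    (∫ u in Set.Ici y, quasiCauchy u) / (y * quasiCauchy y) ≤ y ^ 2 / (y ^ 2 - 3) := by
  have hy0 : (0:ℝ) < y := by linarith
  rw [ratio_eq hy]
  set s := ∫ u in Set.Ioi y, phi u / u ^ 2 with hs_def
  have hB := phi_pos y
  have hs := I2_pos hy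
  have hs_le : s ≤ phi y / y ^ 3 := I2_le' hy0
  have hs_ge : phi y / y ^ 3 - 3 * (phi y / y ^ 5) ≤ s := I2_ge hy0
  have hP_le : PhiBar y ≤ phi y / y := PhiBar_le hy0
  have hP_ge : phi y / y - phi y / y ^ 3 ≤ PhiBar y := PhiBar_ge hy0
  constructor
  · have h1 : (1 - 1/y^2) = (phi y / y - phi y / y ^ 3) / (phi y / y) := by
      field_simp
    rw [h1]
    apply div_le_div₀ (PhiBar_nonneg y) hP_ge (mul_pos (pow_pos hy0 2) hs)
    calc y ^ 2 * s ≤ y ^ 2 * (phi y / y ^ 3) := by nlinarith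
      _ = phi y / y := by field_simp
  · have h23 : (0:ℝ) < y ^ 2 - 3 := by nlinarith
    have hdpos : 0 < phi y / y - 3 * (phi y / y ^ 3) := by
      have e : phi y / y - 3 * (phi y / y ^ 3) = phi y * (y ^ 2 - 3) / y ^ 3 := by
        field_simp
      rw [e]; positivity
    have h2 : y ^ 2 / (y ^ 2 - 3) = (phi y / y) / (phi y / y - 3 * (phi y / y ^ 3)) := by
      rw [div_eq_div_iff h23.ne' hdpos.ne']
      field_simp
    rw [h2]
    apply div_le_div₀ (by positivity) hP_le hdpos
    calc phi y / y - 3 * (phi y / y ^ 3) = y ^ 2 * (phi y / y ^ 3 - 3 * (phi y / y ^ 5)) := by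
          field_simp
      _ ≤ y ^ 2 * s := by nlinarith

/-- Tail-regularity of the quasi-Cauchy density with exponent `κ = 2`. -/
theorem quasiCauchy_tail_regularity :
    Tendsto (fun y : ℝ => (∫ u in Set.Ici y, quasiCauchy u) / (y * quasiCauchy y))
      atTop (nhds 1) ∧
    ∃ y₀ c₁ c₂ : ℝ, 0 < c₁ ∧ ∀ y : ℝ, y₀ ≤ y →
      c₁ ≤ (∫ u in Set.Ici y, quasiCauchy u) / (y * quasiCauchy y) ∧
      (∫ u in Set.Ici y, quasiCauchy u) / (y * quasiCauchy y) ≤ c₂ := by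
  have hlow : Tendsto (fun y : ℝ => 1 - 1 / y ^ 2) atTop (nhds 1) := by
    have h : Tendsto (fun y : ℝ => ((y:ℝ) ^ 2)⁻¹) atTop (nhds 0) :=
      tendsto_inv_atTop_zero.comp (tendsto_pow_atTop two_ne_zero)
    have h2 := tendsto_const_nhds (α := ℝ) (f := atTop) (x := (1:ℝ)) |>.sub h
    rw [sub_zero] at h2
    exact h2.congr fun y => by rw [one_div]
  have hup : Tendsto (fun y : ℝ => y ^ 2 / (y ^ 2 - 3)) atTop (nhds 1) := by
    have hden : Tendsto (fun y : ℝ => y ^ 2 - 3) atTop atTop := by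
      have := tendsto_atTop_add_const_right atTop (-3 : ℝ) (tendsto_pow_atTop two_ne_zero)
      simpa [sub_eq_add_neg] using this
    have h0 : Tendsto (fun y : ℝ => 3 / (y ^ 2 - 3)) atTop (nhds 0) :=
      tendsto_const_nhds.div_atTop hden
    have h1 : Tendsto (fun y : ℝ => 1 + 3 / (y ^ 2 - 3)) atTop (nhds 1) := by
      have := tendsto_const_nhds (α := ℝ) (f := atTop) (x := (1:ℝ)) |>.add h0
      rwa [add_zero] at this
    refine Tendsto.congr' ?_ h1
    filter_upwards [eventually_ge_atTop (2:ℝ)] with y hy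
    have h23 : (y:ℝ) ^ 2 - 3 ≠ 0 := by nlinarith
    field_simp
    ring
  have hmain : Tendsto (fun y : ℝ => (∫ u in Set.Ici y, quasiCauchy u) / (y * quasiCauchy y))
      atTop (nhds 1) := by
    apply tendsto_of_tendsto_of_tendsto_of_le_of_le' hlow hup
    · filter_upwards [eventually_ge_atTop (2:ℝ)] with y hy
      exact (ratio_bounds hy).1
    · filter_upwards [eventually_ge_atTop (2:ℝ)] with y hy
      exact (ratio_bounds hy).2
  refine ⟨hmain, ?_⟩
  have h1 := hmain.eventually (eventually_ge_nhds (by norm_num : (1:ℝ)/2 < 1))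
  have h2 := hmain.eventually (eventually_le_nhds (by norm_num : (1:ℝ) < 2))
  obtain ⟨y₀, H⟩ := eventually_atTop.1 (h1.and h2)
  exact ⟨y₀, 1/2, 2, by norm_num, fun y hy => H y hy⟩
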